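/- arXiv:1202.3064 — 4 statements merged into one kernel-verified Lean document; each statement's English description precedes it below -/
import Mathlib

section
/- Let λ and μ be real numbers. There exists a 3×3 doubly stochastic matrix whose eigenvalues, counted with algebraic multiplicity, are 1, λ, μ if and only if there exists a symmetric 3×3 doubly stochastic matrix whose eigenvalues, counted with algebraic multiplicity, are 1, λ, μ. (That is, the real and the symmetric doubly stochastic inverse eigenvalue problems are equivalent for n = 3.) -/
open Matrix Polynomial

/-- A real square matrix is doubly stochastic if its entries are nonnegative and all of its
row sums and column sums are equal to `1`. -/
def DoublyStochastic {n : ℕ} (D : Matrix (Fin n) (Fin n) ℝ) : Prop :=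
  (∀ i j, 0 ≤ D i j) ∧ (∀ i, ∑ j, D i j = 1) ∧ (∀ j, ∑ i, D i j = 1)

/-!
For `μ ≤ λ`, the spectrum `1, λ, μ` is realised by a doubly stochastic `3 × 3` matrix exactly
when `λ ≤ 1` and `λ + 3μ + 2 ≥ 0`. Necessity comes from three polynomial inequalities between
the trace `t = 1 + λ + μ` and the determinant `δ = λμ` of any doubly stochastic `3 × 3` matrix:
`0 ≤ t ≤ 3`, `(1 - λ)(1 - μ) = δ - t + 2 ≥ 0` and
`(3λ + μ + 2)(λ + 3μ + 2) = 3t² + 2t - 1 + 4δ ≥ 0`. Sufficiency is witnessed by the symmetric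
matrix `!![1 - 2a, a, a; a, 1 - p - a, p; a, p, 1 - p - a]`, whose eigenvalues are `1`
(on `(1, 1, 1)`), `1 - 3a` (on `(-2, 1, 1)`) and `1 - 2p - a` (on `(0, 1, -1)`).
-/

theorem Matrix.trace_eq_sum_and_det_eq_prod_of_charpoly_eq {R n : Type*} [CommRing R]
    [IsDomain R] [Fintype n] [DecidableEq n] {A : Matrix n n R} {s : Multiset R}
    (h : A.charpoly = (s.map fun a => X - C a).prod) :
    A.trace = s.sum ∧ A.det = s.prod := by
  have hsplit : A.charpoly.Splits :=
    h ▸ Splits.multisetProd (by simp [Splits.X_sub_C])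
  have hroots : A.charpoly.roots = s := h ▸ roots_multiset_prod_X_sub_C s
  exact ⟨hroots ▸ trace_eq_sum_roots_charpoly_of_splits hsplit,
    hroots ▸ det_eq_prod_roots_charpoly_of_splits hsplit⟩

theorem Matrix.charpoly_symm_fin_three {R : Type*} [CommRing R] (a p : R) :
    !![1 - 2 * a, a, a; a, 1 - p - a, p; a, p, 1 - p - a].charpoly
      = (X - C 1) * (X - C (1 - 3 * a)) * (X - C (1 - 2 * p - a)) := by
  simp only [charpoly, det_fin_three, charmatrix_apply_eq, charmatrix_apply_ne, ne_eq,
    Fin.reduceEq, not_false_eq_true, of_apply, cons_val', cons_val_zero, cons_val_one, cons_val,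
    cons_val_fin_one, map_sub, map_one, map_mul, map_ofNat]
  ring

theorem doublyStochastic_symm_fin_three {a p : ℝ} (ha : 0 ≤ a) (hp : 0 ≤ p) (h2a : 2 * a ≤ 1)
    (hpa : p + a ≤ 1) :
    DoublyStochastic !![1 - 2 * a, a, a; a, 1 - p - a, p; a, p, 1 - p - a] := by
  refine ⟨fun i j => ?_, fun i => ?_, fun j => ?_⟩ <;>
    [fin_cases i <;> fin_cases j; fin_cases i; fin_cases j] <;>
    simp only [Fin.zero_eta, Fin.mk_one, Fin.reduceFinMk, of_apply, cons_val', cons_val,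
      cons_val_zero, cons_val_one, cons_val_fin_one, Fin.sum_univ_three] <;>
    linarith

namespace DoublyStochastic

variable {D : Matrix (Fin 3) (Fin 3) ℝ}

theorem eq_fin_three (hD : DoublyStochastic D) :
    D = !![D 0 0, D 0 1, 1 - D 0 0 - D 0 1;
           D 1 0, D 1 1, 1 - D 1 0 - D 1 1;
           1 - D 0 0 - D 1 0, 1 - D 0 1 - D 1 1, D 0 0 + D 0 1 + D 1 0 + D 1 1 - 1] := by
  obtain ⟨-, hrow, hcol⟩ := hD
  have := hrow 0; have := hrow 1; have := hrow 2; have := hcol 0; have := hcol 1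
  simp only [Fin.sum_univ_three] at *
  ext i j
  fin_cases i <;> fin_cases j <;>
    simp only [Fin.zero_eta, Fin.mk_one, Fin.reduceFinMk, of_apply, cons_val', cons_val,
      cons_val_zero, cons_val_one, cons_val_fin_one] <;>
    linarith

theorem trace_nonneg (hD : DoublyStochastic D) : 0 ≤ D.trace :=
  Finset.sum_nonneg fun i _ => hD.1 i i

theorem trace_le_three (hD : DoublyStochastic D) : D.trace ≤ 3 := by
  obtain ⟨h, hrow, -⟩ := hD
  have := hrow 0; have := hrow 1; have := hrow 2
  simp only [Fin.sum_univ_three] at *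
  rw [trace_fin_three]
  linarith [h 0 1, h 0 2, h 1 0, h 1 2, h 2 0, h 2 1]

/-- The three brackets are the principal `2 × 2` minors of `1 - D`, expanded as in the
matrix-tree theorem; their sum is `charpoly.derivative.eval 1`. -/
theorem det_sub_trace_add_two (hD : DoublyStochastic D) :
    D.det - D.trace + 2 =
      (D 0 1 * D 1 2 + D 0 2 * D 1 0 + D 0 2 * D 1 2) +
      (D 0 1 * D 2 0 + D 0 1 * D 2 1 + D 0 2 * D 2 1) +
      (D 1 0 * D 2 0 + D 1 0 * D 2 1 + D 1 2 * D 2 0) := by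
  rw [hD.eq_fin_three]
  simp only [det_fin_three, trace_fin_three, of_apply, cons_val', cons_val, cons_val_zero,
    cons_val_one, cons_val_fin_one]
  ring

theorem trace_sub_two_le_det (hD : DoublyStochastic D) : D.trace - 2 ≤ D.det := by
  have h := hD.1
  nlinarith [hD.det_sub_trace_add_two, mul_nonneg (h 0 1) (h 1 2), mul_nonneg (h 0 2) (h 1 0),
    mul_nonneg (h 0 2) (h 1 2), mul_nonneg (h 0 1) (h 2 0), mul_nonneg (h 0 1) (h 2 1),
    mul_nonneg (h 0 2) (h 2 1), mul_nonneg (h 1 0) (h 2 0), mul_nonneg (h 1 0) (h 2 1),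
    mul_nonneg (h 1 2) (h 2 0)]

theorem neg_four_mul_det_le (hD : DoublyStochastic D) :
    -4 * D.det ≤ 3 * D.trace ^ 2 + 2 * D.trace - 1 := by
  have h := hD.1
  rw [hD.eq_fin_three] at h ⊢
  simp only [Fin.forall_fin_succ, IsEmpty.forall_iff, and_true, of_apply, cons_val_zero,
    cons_val_succ] at h
  obtain ⟨⟨h00, h01, h02⟩, ⟨h10, h11, h12⟩, -, -, h22⟩ := h
  simp only [det_fin_three, trace_fin_three, of_apply, cons_val', cons_val, cons_val_zero,
    cons_val_one, cons_val_fin_one]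
  nlinarith [mul_nonneg (mul_nonneg h00 h11) h22, mul_nonneg (mul_nonneg h01 h10) h22,
    mul_nonneg (mul_nonneg h02 h12) h22, sq_nonneg (D 0 0 + D 1 1 - D 0 1 - D 1 0),
    sq_nonneg (D 0 0 - D 1 1), sq_nonneg (D 0 1 - D 1 0)]

theorem eigenvalue_bounds_of_charpoly_eq (hD : DoublyStochastic D) {lam mu : ℝ}
    (hcp : D.charpoly = (X - C 1) * (X - C lam) * (X - C mu)) :
    lam ≤ 1 ∧ mu ≤ 1 ∧ 0 ≤ 3 * lam + mu + 2 ∧ 0 ≤ lam + 3 * mu + 2 := by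
  obtain ⟨htr, hdet⟩ := trace_eq_sum_and_det_eq_prod_of_charpoly_eq (s := {1, lam, mu})
    (by rw [hcp]; simp [mul_assoc])
  simp only [Multiset.insert_eq_cons, Multiset.sum_cons, Multiset.prod_cons,
    Multiset.sum_singleton, Multiset.prod_singleton, one_mul] at htr hdet
  have h0 := hD.trace_nonneg
  have h3 := hD.trace_le_three
  have h2 := hD.trace_sub_two_le_det
  have h4 := hD.neg_four_mul_det_le
  rw [htr] at h0 h3 h2 h4
  rw [hdet] at h2 h4
  have hone : 0 ≤ (1 - lam) * (1 - mu) := by linarith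
  have hfactors : 0 ≤ (3 * lam + mu + 2) * (lam + 3 * mu + 2) := by nlinarith
  -- `λ + μ ≤ 2` settles the sign pattern of `hone`; the factors of `hfactors` have sum `4t ≥ 0`
  refine ⟨?_, ?_, ?_, ?_⟩ <;> nlinarith

end DoublyStochastic

theorem exists_isSymm_doublyStochastic_charpoly_eq {lam mu : ℝ} (hml : mu ≤ lam) (hl : lam ≤ 1)
    (h : 0 ≤ lam + 3 * mu + 2) :
    ∃ D : Matrix (Fin 3) (Fin 3) ℝ, D.IsSymm ∧ DoublyStochastic D ∧
      D.charpoly = (X - C 1) * (X - C lam) * (X - C mu) := by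
  obtain ⟨a, rfl⟩ : ∃ a, lam = 1 - 3 * a := ⟨(1 - lam) / 3, by ring⟩
  obtain ⟨p, rfl⟩ : ∃ p, mu = 1 - 2 * p - a := ⟨(1 - a - mu) / 2, by ring⟩
  refine ⟨!![1 - 2 * a, a, a; a, 1 - p - a, p; a, p, 1 - p - a], ?_, ?_,
    charpoly_symm_fin_three a p⟩
  · refine IsSymm.ext fun i j => ?_
    fin_cases i <;> fin_cases j <;> rfl
  · exact doublyStochastic_symm_fin_three (by linarith) (by linarith) (by linarith)
      (by linarith)

/-- The real and symmetric doubly stochastic inverse eigenvalue problems are equivalent for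
`n = 3`: there is a `3 × 3` doubly stochastic matrix with eigenvalues `1, λ, μ` if and only
if there is a symmetric one. -/
theorem rdiep_eq_sdiep_three (lam mu : ℝ) :
    (∃ D : Matrix (Fin 3) (Fin 3) ℝ, DoublyStochastic D ∧
        D.charpoly = (X - C 1) * (X - C lam) * (X - C mu)) ↔
      (∃ D : Matrix (Fin 3) (Fin 3) ℝ, D.IsSymm ∧ DoublyStochastic D ∧
        D.charpoly = (X - C 1) * (X - C lam) * (X - C mu)) := by
  refine ⟨fun ⟨D, hD, hcp⟩ => ?_, fun ⟨D, _, hD, hcp⟩ => ⟨D, hD, hcp⟩⟩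
  obtain ⟨hlam, hmu, hlm, hml⟩ := hD.eigenvalue_bounds_of_charpoly_eq hcp
  rcases le_total mu lam with h | h
  · exact exists_isSymm_doublyStochastic_charpoly_eq h hlam hml
  · obtain ⟨S, hS, hSD, hScp⟩ :=
      exists_isSymm_doublyStochastic_charpoly_eq h hmu (by linarith)
    exact ⟨S, hS, hSD, hScp.trans (mul_right_comm _ _ _)⟩
end

section
/- Let n ≥ 2 and let 1 ≥ λ₂ ≥ ... ≥ λₙ ≥ −1 be real numbers. If both 1 − (n−1)λ₂ + λ₃ + λ₄ + ... + λₙ ≥ 0 and 1 + (n−1)λₙ ≥ 0 hold, then there exists an n×n doubly stochastic matrix D whose eigenvalues, counted with algebraic multiplicity, are 1, λ₂, ..., λₙ. -/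
open Matrix Polynomial

/-!
Let `Gₘ = tailAverage n m` average the coordinates `m, …, n-1` and fix the others. Each `Gₘ` is symmetric and
stochastic with diagonal entries at least `1/n`, and `G_{n-1} = 1`. Hence `∑ₘ wₘ Gₘ` is doubly
stochastic when the weights sum to `1` and all of them but `w_{n-1}` are nonnegative, provided its
smallest possible diagonal entry `w_{n-1} + (1 - w_{n-1})/n` is nonnegative.

In the basis of uniform vectors on the tails `{k, …, n-1}`, `Gₘ` sends the `k`-th vector to the
`(min k m)`-th one. So `∑ₘ wₘ Gₘ` is upper triangular in that basis, with diagonal entries the tail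
sums `∑_{m ≥ k} wₘ`. Taking `wₘ = λ_{m+1} - λ_{m+2}`, where `λ₁ = 1` and `λ_{n+1} = 0`, makes
these tail sums `1, λ₂, …, λₙ`. The weights `wₘ` for `m < n-1` are nonnegative because the
`λ` are ordered, and the diagonal condition reads `1 + (n-1)λₙ ≥ 0`.
-/

open Finset

lemma card_filter_le_val (n k : ℕ) : #{i : Fin n | k ≤ (i : ℕ)} = n - k := by
  have h := card_filter_add_card_filter_not (s := (univ : Finset (Fin n))) (k ≤ ·.val)
  simp only [not_le, Fin.card_filter_val_lt, card_univ, Fintype.card_fin] at h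
  omega

lemma cast_sub_pos_of_le_val {n k : ℕ} {i : Fin n} (h : k ≤ (i : ℕ)) : (0 : ℝ) < n - k := by
  have : (k : ℝ) < n := by exact_mod_cast h.trans_lt i.isLt
  linarith

noncomputable def tailAverage (n k : ℕ) : Matrix (Fin n) (Fin n) ℝ :=
  of fun i j => if k ≤ (i : ℕ) ∧ k ≤ (j : ℕ) then ((n : ℝ) - k)⁻¹ else if i = j then 1 else 0

lemma tailAverage_apply_of_le {n k : ℕ} {i : Fin n} (hi : k ≤ (i : ℕ)) (j : Fin n) :
    tailAverage n k i j = if k ≤ (j : ℕ) then ((n : ℝ) - k)⁻¹ else 0 := by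
  by_cases hj : k ≤ (j : ℕ)
  · simp [tailAverage, hi, hj]
  · simp [tailAverage, hi, hj, show i ≠ j by rintro rfl; exact hj hi]

lemma tailAverage_apply_of_lt {n k : ℕ} {i : Fin n} (hi : (i : ℕ) < k) (j : Fin n) :
    tailAverage n k i j = if i = j then 1 else 0 := by
  simp [tailAverage, not_le.2 hi]

lemma tailAverage_transpose (n k : ℕ) : (tailAverage n k)ᵀ = tailAverage n k := by
  ext i j
  simp only [tailAverage, transpose_apply, of_apply, and_comm, eq_comm]

lemma tailAverage_eq_one {n k : ℕ} (h : n ≤ k + 1) : tailAverage n k = 1 := by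
  ext i j
  by_cases hki : k ≤ (i : ℕ)
  · have hij : i = j ↔ k ≤ (j : ℕ) := by omega
    have hn : (n : ℝ) - k = 1 := by
      rw [sub_eq_iff_eq_add']; exact_mod_cast (by omega : n = k + 1)
    rw [tailAverage_apply_of_le hki, one_apply, hn, inv_one]
    exact if_congr hij.symm rfl rfl
  · rw [tailAverage_apply_of_lt (not_le.1 hki), one_apply]

lemma ite_le_tailAverage_apply (n k : ℕ) (i j : Fin n) :
    (if i = j then (n : ℝ)⁻¹ else 0) ≤ tailAverage n k i j := by
  simp only [tailAverage, of_apply]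
  split_ifs with hij hki hki
  · exact inv_anti₀ (cast_sub_pos_of_le_val hki.1) (sub_le_self _ k.cast_nonneg)
  · exact inv_le_one_of_one_le₀ (by exact_mod_cast i.pos)
  · exact (inv_pos.2 (cast_sub_pos_of_le_val hki.1)).le
  · exact le_rfl

lemma sum_tailAverage_apply {n k : ℕ} (i : Fin n) : ∑ j, tailAverage n k i j = 1 := by
  by_cases hki : k ≤ (i : ℕ)
  · rw [sum_congr rfl fun j _ => tailAverage_apply_of_le hki j, sum_ite, sum_const_zero, add_zero,
      sum_const, card_filter_le_val, nsmul_eq_mul, Nat.cast_sub (by omega)]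
    exact mul_inv_cancel₀ (cast_sub_pos_of_le_val hki).ne'
  · simp [tailAverage_apply_of_lt (not_le.1 hki)]

noncomputable def tailUniform (n : ℕ) : Matrix (Fin n) (Fin n) ℝ :=
  of fun i k => if k ≤ i then ((n : ℝ) - k)⁻¹ else 0

def minMatrix (n m : ℕ) : Matrix (Fin n) (Fin n) ℝ :=
  of fun k' k => if (k' : ℕ) = min (k : ℕ) m then 1 else 0

lemma isUnit_det_tailUniform (n : ℕ) : IsUnit (tailUniform n).det := by
  have hlow : (tailUniform n).IsLowerTriangular := fun i k (hik : i < k) => by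
    simp [tailUniform, not_le.2 hik]
  rw [det_of_isLowerTriangular _ hlow, isUnit_iff_ne_zero, prod_ne_zero_iff]
  intro k _
  simpa [tailUniform] using (cast_sub_pos_of_le_val (i := k) le_rfl).ne'

lemma tailAverage_mul_tailUniform {n m : ℕ} (hm : m < n) :
    tailAverage n m * tailUniform n = tailUniform n * minMatrix n m := by
  ext i k
  have hmin : ∀ k' : Fin n, (k' : ℕ) = min (k : ℕ) m ↔ k' = ⟨min k m, by omega⟩ :=
    fun _ => by rw [Fin.ext_iff]
  simp only [mul_apply, minMatrix, of_apply, hmin, mul_ite, mul_one, mul_zero, sum_ite_eq',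
    mem_univ, if_true]
  by_cases hmi : m ≤ (i : ℕ)
  · have hterm : ∀ j : Fin n, tailAverage n m i j * tailUniform n j k =
        if max m k ≤ (j : ℕ) then ((n : ℝ) - m)⁻¹ * ((n : ℝ) - k)⁻¹ else 0 := by
      intro j
      simp only [tailAverage_apply_of_le hmi, tailUniform, of_apply, Fin.le_def, max_le_iff,
        ite_mul, mul_ite, mul_zero, zero_mul, ← ite_and]
      exact if_congr and_comm rfl rfl
    rw [sum_congr rfl fun j _ => hterm j, sum_ite, sum_const_zero, add_zero, sum_const,
      card_filter_le_val, nsmul_eq_mul]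
    simp only [tailUniform, of_apply, Fin.le_def, min_le_iff.2 (Or.inr hmi), if_true]
    have hk : (n : ℝ) - k ≠ 0 := (cast_sub_pos_of_le_val (i := k) le_rfl).ne'
    have hm' : (n : ℝ) - m ≠ 0 := (cast_sub_pos_of_le_val hmi).ne'
    rcases le_total m k with hmk | hkm
    · rw [max_eq_right hmk, min_eq_right hmk, Nat.cast_sub k.isLt.le]
      field_simp
    · rw [max_eq_left hkm, min_eq_left hkm, Nat.cast_sub hm.le]
      field_simp
  · simp only [tailAverage_apply_of_lt (not_le.1 hmi), ite_mul, one_mul, zero_mul, sum_ite_eq,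
      mem_univ, if_true, tailUniform, of_apply, Fin.le_def]
    rcases le_total (k : ℕ) m with hkm | hmk
    · rw [min_eq_left hkm]
    · simp [min_eq_right hmk, hmi, show ¬(k : ℕ) ≤ i by omega]

lemma charpoly_eq_of_mul_eq_mul {ι R : Type*} [Fintype ι] [DecidableEq ι] [CommRing R]
    {A B T : Matrix ι ι R} (hB : IsUnit B.det) (h : A * B = B * T) :
    A.charpoly = T.charpoly := by
  have hA : A = B * T * B⁻¹ := by rw [← h, mul_nonsing_inv_cancel_right _ _ hB]
  rw [hA]
  exact charpoly_units_conj (B.nonsingInvUnit hB) T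

lemma charpoly_sum_smul_tailAverage (n : ℕ) (w : ℕ → ℝ) :
    (∑ m ∈ range n, w m • tailAverage n m).charpoly =
      ∏ k : Fin n, (X - C (∑ m ∈ Ico (k : ℕ) n, w m)) := by
  set T := ∑ m ∈ range n, w m • minMatrix n m
  have hmul : (∑ m ∈ range n, w m • tailAverage n m) * tailUniform n = tailUniform n * T := by
    simp only [T, sum_mul, mul_sum, smul_mul_assoc, mul_smul_comm]
    exact sum_congr rfl fun m hm => by rw [tailAverage_mul_tailUniform (mem_range.1 hm)]
  have hT : T.IsUpperTriangular := fun k' k (hk : k < k') => by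
    simp only [T, Matrix.sum_apply, Matrix.smul_apply, minMatrix, of_apply, smul_eq_mul, mul_ite,
      mul_one, mul_zero]
    exact sum_eq_zero fun m _ => if_neg (by have := Fin.lt_def.1 hk; omega)
  rw [charpoly_eq_of_mul_eq_mul (isUnit_det_tailUniform n) hmul, charpoly_of_isUpperTriangular _ hT]
  refine prod_congr rfl fun k _ => ?_
  have hfilter : (range n).filter (fun m => (k : ℕ) = min (k : ℕ) m) = Ico (k : ℕ) n := by
    ext m; simp only [mem_filter, mem_range, mem_Ico]; omega
  simp only [T, Matrix.sum_apply, Matrix.smul_apply, minMatrix, of_apply, smul_eq_mul, mul_ite,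
    mul_one, mul_zero, ← sum_filter, hfilter]

lemma doublyStochastic_sum_smul_tailAverage (N : ℕ) (w : ℕ → ℝ) (hw : ∀ m < N, 0 ≤ w m)
    (hsum : ∑ m ∈ range (N + 1), w m = 1) (hlast : 0 ≤ 1 + N * w N) :
    DoublyStochastic (∑ m ∈ range (N + 1), w m • tailAverage (N + 1) m) := by
  set D := ∑ m ∈ range (N + 1), w m • tailAverage (N + 1) m
  have hrow : ∀ i, ∑ j, D i j = 1 := fun i => by
    simp only [D, Matrix.sum_apply, Matrix.smul_apply, smul_eq_mul]
    rw [sum_comm]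
    simp only [← mul_sum, sum_tailAverage_apply, mul_one, hsum]
  have hsymm : Dᵀ = D := by
    simp only [D, transpose_sum, transpose_smul, tailAverage_transpose]
  refine ⟨fun i j => ?_, hrow, fun j =>
    (sum_congr rfl fun i _ => (congrFun (congrFun hsymm i) j).symm).trans (hrow j)⟩
  have hdiag : ∀ m, (if i = j then ((N : ℝ) + 1)⁻¹ else 0) ≤ tailAverage (N + 1) m i j :=
    fun m => by simpa using ite_le_tailAverage_apply (N + 1) m i j
  rw [sum_range_succ] at hsum
  calc 0 ≤ if i = j then (1 + N * w N) / (N + 1) else 0 := by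
        split_ifs
        · positivity
        · rfl
    _ = ∑ m ∈ range N, w m * (if i = j then ((N : ℝ) + 1)⁻¹ else 0)
          + w N * (1 : Matrix (Fin (N + 1)) (Fin (N + 1)) ℝ) i j := by
        split_ifs with hij
        · rw [hij, one_apply_eq, ← sum_mul, eq_sub_of_add_eq hsum]
          field_simp
          ring
        · simp [hij]
    _ ≤ D i j := by
        simp only [D, sum_range_succ, tailAverage_eq_one le_rfl, Matrix.add_apply,
          Matrix.sum_apply, Matrix.smul_apply, smul_eq_mul]
        gcongr with m hm
        · exact hw m (mem_range.1 hm)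
        · exact hdiag m

theorem rdiep_sufficient_general (n : ℕ) (hn : 2 ≤ n) (L : ℕ → ℝ) (hub : L 2 ≤ 1)
    (hdec : ∀ j, 2 ≤ j → j < n → L (j + 1) ≤ L j)
    (hcond2 : 0 ≤ 1 + ((n : ℝ) - 1) * L n) :
    ∃ D : Matrix (Fin n) (Fin n) ℝ, DoublyStochastic D ∧
      D.charpoly = (X - C 1) * ∏ j ∈ Finset.Icc 2 n, (X - C (L j)) := by
  obtain ⟨N, rfl⟩ : ∃ N, n = N + 1 := ⟨n - 1, by omega⟩
  -- `σ k = λ_{k+1}`, with `λ₁ = 1` and `λ_{n+1} = 0`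
  set σ : ℕ → ℝ := fun k => if k = 0 then 1 else if k ≤ N then L (k + 1) else 0
  have hanti : ∀ m < N, σ (m + 1) ≤ σ m := by
    rintro (_ | m) hm
    · simpa [σ, show 1 ≤ N by omega] using hub
    · simpa [σ, show m + 1 ≤ N by omega, show m + 2 ≤ N by omega]
        using hdec (m + 2) (by omega) (by omega)
  have htel : ∀ k ≤ N + 1, ∑ m ∈ Ico k (N + 1), (σ m - σ (m + 1)) = σ k := fun k hk => by
    have hlast : σ (N + 1) = 0 := by simp [σ]
    simpa only [neg_sub_neg, hlast, sub_zero] using sum_Ico_sub (fun m => -σ m) hk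
  refine ⟨∑ m ∈ range (N + 1), (σ m - σ (m + 1)) • tailAverage (N + 1) m, ?_, ?_⟩
  · refine doublyStochastic_sum_smul_tailAverage N _ (fun m hm => sub_nonneg.2 (hanti m hm)) ?_ ?_
    · rw [range_eq_Ico, htel 0 (by omega)]
      simp [σ]
    · simpa [σ, show N ≠ 0 by omega] using hcond2
  · rw [charpoly_sum_smul_tailAverage, Fin.prod_univ_succ]
    simp only [fun k : Fin (N + 1) => htel k k.isLt.le]
    congr 1
    have hsucc : ∀ k : Fin N, σ k.succ = L (k + 2) := fun k => by simp [σ, k.isLt]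
    have hIcc : Icc 2 (N + 1) = Ico (0 + 2) (N + 2) := by ext; simp; omega
    rw [hIcc, ← prod_Ico_add', ← range_eq_Ico, ← Fin.prod_univ_eq_prod_range]
    simp only [hsucc]

/-- If `1 ≥ λ₂ ≥ ⋯ ≥ λₙ ≥ -1`, `1 - (n-1)λ₂ + λ₃ + ⋯ + λₙ ≥ 0` and `1 + (n-1)λₙ ≥ 0`,
then `1, λ₂, …, λₙ` is the spectrum of an `n × n` doubly stochastic matrix. -/
theorem rdiep_sufficient (n : ℕ) (hn : 2 ≤ n) (L : ℕ → ℝ) (hub : L 2 ≤ 1)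
    (hdec : ∀ j, 2 ≤ j → j < n → L (j + 1) ≤ L j)
    (hlb : -1 ≤ L n)
    (hcond1 : 0 ≤ 1 - ((n : ℝ) - 1) * L 2 + ∑ j ∈ Finset.Icc 3 n, L j)
    (hcond2 : 0 ≤ 1 + ((n : ℝ) - 1) * L n) :
    ∃ D : Matrix (Fin n) (Fin n) ℝ, DoublyStochastic D ∧
      D.charpoly = (X - C 1) * ∏ j ∈ Finset.Icc 2 n, (X - C (L j)) :=
  rdiep_sufficient_general n hn L hub hdec hcond2
end

section
/- Let 1 ≥ λ₂ ≥ λ₃ ≥ λ₄ ≥ λ₅ ≥ λ₆ ≥ −1 be real numbers with 1 + λ₂ + λ₃ + λ₄ + λ₅ + λ₆ ≥ 0. If 1/6 + λ₂/6 + 2λ₆/3 ≥ 0, 1/6 + λ₂/6 − 2λ₃/3 + λ₄/3 ≥ 0, and 1/6 + λ₂/6 − 2λ₅/3 + λ₆/3 ≥ 0, then there exists a 6×6 doubly stochastic matrix whose eigenvalues, counted with algebraic multiplicity, are 1, λ₂, λ₃, λ₄, λ₅, λ₆. -/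
/-!
Let `v₁, …, v₆` be the orthogonal vectors `(1,1,1,1,1,1)`, `(1,1,1,-1,-1,-1)`, `(1,-1,0,0,0,0)`,
`(1,1,-2,0,0,0)`, `(0,0,0,1,-1,0)`, `(0,0,0,1,1,-2)` and put
`D = ∑ₖ λₖ vₖ vₖᵀ / ‖vₖ‖²` with `λ₁ = 1`. Then `D` is symmetric with eigenvectors `vₖ`, so its
spectrum is `1, λ₂, …, λ₆`, and `D 𝟙 = 𝟙` makes all row and column sums `1`. Its entries are
affine in the `λₖ`, and under the ordering `λ₂ ≥ ⋯ ≥ λ₆` each one is bounded below by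
`(1 - λ₂)/6` or by one of the three expressions assumed nonnegative.
-/

open Matrix Polynomial

theorem Matrix.charpoly_mul_mul_eq_of_mul_eq_one {n R : Type*} [Fintype n] [DecidableEq n]
    [CommRing R] {P P' : Matrix n n R} (h : P' * P = 1) (A : Matrix n n R) :
    (P * A * P').charpoly = A.charpoly := by
  rw [charpoly_mul_comm, ← mul_assoc, h, one_mul]

theorem DoublyStochastic.of_isSymm {n : ℕ} {D : Matrix (Fin n) (Fin n) ℝ} (hD : D.IsSymm)
    (hnonneg : ∀ i j, 0 ≤ D i j) (hrow : ∀ i, ∑ j, D i j = 1) : DoublyStochastic D :=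
  ⟨hnonneg, hrow, fun j => by simpa only [hD.apply] using hrow j⟩

namespace RDIEPSix

/-- Columns are the eigenvectors `v₁, …, v₆`. -/
def eigvecs : Matrix (Fin 6) (Fin 6) ℝ :=
  !![1, 1, 1, 1, 0, 0;
     1, 1, -1, 1, 0, 0;
     1, 1, 0, -2, 0, 0;
     1, -1, 0, 0, 1, 1;
     1, -1, 0, 0, -1, 1;
     1, -1, 0, 0, 0, -2]

/-- Rows are `vₖᵀ / ‖vₖ‖²`. -/
noncomputable def eigvecsInv : Matrix (Fin 6) (Fin 6) ℝ :=
  !![1/6, 1/6, 1/6, 1/6, 1/6, 1/6;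
     1/6, 1/6, 1/6, -1/6, -1/6, -1/6;
     1/2, -1/2, 0, 0, 0, 0;
     1/6, 1/6, -1/3, 0, 0, 0;
     0, 0, 0, 1/2, -1/2, 0;
     0, 0, 0, 1/6, 1/6, -1/3]

theorem eigvecsInv_mul_eigvecs : eigvecsInv * eigvecs = 1 := by
  ext i j
  fin_cases i <;> fin_cases j <;>
    simp [eigvecs, eigvecsInv, mul_apply, Fin.sum_univ_six, one_apply] <;> norm_num

noncomputable def realizingMatrix (l2 l3 l4 l5 l6 : ℝ) : Matrix (Fin 6) (Fin 6) ℝ :=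
  !![1/6+l2/6+l3/2+l4/6, 1/6+l2/6-l3/2+l4/6, 1/6+l2/6-l4/3, (1-l2)/6, (1-l2)/6, (1-l2)/6;
     1/6+l2/6-l3/2+l4/6, 1/6+l2/6+l3/2+l4/6, 1/6+l2/6-l4/3, (1-l2)/6, (1-l2)/6, (1-l2)/6;
     1/6+l2/6-l4/3, 1/6+l2/6-l4/3, 1/6+l2/6+2*l4/3, (1-l2)/6, (1-l2)/6, (1-l2)/6;
     (1-l2)/6, (1-l2)/6, (1-l2)/6, 1/6+l2/6+l5/2+l6/6, 1/6+l2/6-l5/2+l6/6, 1/6+l2/6-l6/3;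
     (1-l2)/6, (1-l2)/6, (1-l2)/6, 1/6+l2/6-l5/2+l6/6, 1/6+l2/6+l5/2+l6/6, 1/6+l2/6-l6/3;
     (1-l2)/6, (1-l2)/6, (1-l2)/6, 1/6+l2/6-l6/3, 1/6+l2/6-l6/3, 1/6+l2/6+2*l6/3]

variable (l2 l3 l4 l5 l6 : ℝ)

theorem realizingMatrix_eq :
    realizingMatrix l2 l3 l4 l5 l6 = eigvecs * diagonal ![1, l2, l3, l4, l5, l6] * eigvecsInv := by
  ext i j
  simp only [mul_apply, Fin.sum_univ_six]
  fin_cases i <;> fin_cases j <;> simp [realizingMatrix, eigvecs, eigvecsInv] <;> ring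

theorem realizingMatrix_charpoly :
    (realizingMatrix l2 l3 l4 l5 l6).charpoly =
      (X - C 1) * (X - C l2) * (X - C l3) * (X - C l4) * (X - C l5) * (X - C l6) := by
  rw [realizingMatrix_eq, charpoly_mul_mul_eq_of_mul_eq_one eigvecsInv_mul_eigvecs,
    charpoly_diagonal, Fin.prod_univ_six]
  simp

theorem realizingMatrix_isSymm : (realizingMatrix l2 l3 l4 l5 l6).IsSymm := by
  ext i j
  fin_cases i <;> fin_cases j <;> simp [realizingMatrix]

theorem realizingMatrix_row_sum (i : Fin 6) : ∑ j, realizingMatrix l2 l3 l4 l5 l6 i j = 1 := by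
  fin_cases i <;> simp [realizingMatrix, Fin.sum_univ_six] <;> ring

variable {l2 l3 l4 l5 l6} in
theorem realizingMatrix_nonneg (h2 : l2 ≤ 1) (h4 : l4 ≤ l3) (h5 : l5 ≤ l4) (h6 : l6 ≤ l5)
    (hc1 : 0 ≤ 1 / 6 + l2 / 6 + 2 * l6 / 3)
    (hc2 : 0 ≤ 1 / 6 + l2 / 6 - 2 * l3 / 3 + l4 / 3)
    (hc3 : 0 ≤ 1 / 6 + l2 / 6 - 2 * l5 / 3 + l6 / 3) (i j : Fin 6) :
    0 ≤ realizingMatrix l2 l3 l4 l5 l6 i j := by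
  fin_cases i <;> fin_cases j <;> simp [realizingMatrix] <;> linarith

end RDIEPSix

open RDIEPSix in
theorem rdiep_six_general (l2 l3 l4 l5 l6 : ℝ) (h2 : l2 ≤ 1) (h4 : l4 ≤ l3)
    (h5 : l5 ≤ l4) (h6 : l6 ≤ l5)
    (hc1 : 0 ≤ 1 / 6 + l2 / 6 + 2 * l6 / 3)
    (hc2 : 0 ≤ 1 / 6 + l2 / 6 - 2 * l3 / 3 + l4 / 3)
    (hc3 : 0 ≤ 1 / 6 + l2 / 6 - 2 * l5 / 3 + l6 / 3) :
    ∃ D : Matrix (Fin 6) (Fin 6) ℝ, DoublyStochastic D ∧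
      D.charpoly = (X - C 1) * (X - C l2) * (X - C l3) * (X - C l4) * (X - C l5) *
        (X - C l6) :=
  ⟨realizingMatrix l2 l3 l4 l5 l6,
    .of_isSymm (realizingMatrix_isSymm ..)
      (realizingMatrix_nonneg h2 h4 h5 h6 hc1 hc2 hc3) (realizingMatrix_row_sum l2 l3 l4 l5 l6),
    realizingMatrix_charpoly ..⟩

/-- If `1 ≥ λ₂ ≥ ⋯ ≥ λ₆ ≥ -1` with `1 + λ₂ + ⋯ + λ₆ ≥ 0`, and
`1/6 + λ₂/6 + 2λ₆/3 ≥ 0`, `1/6 + λ₂/6 - 2λ₃/3 + λ₄/3 ≥ 0`,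
`1/6 + λ₂/6 - 2λ₅/3 + λ₆/3 ≥ 0`, then `1, λ₂, …, λ₆` is the spectrum of a `6 × 6`
doubly stochastic matrix. -/
theorem rdiep_six (l2 l3 l4 l5 l6 : ℝ) (h2 : l2 ≤ 1) (h3 : l3 ≤ l2) (h4 : l4 ≤ l3)
    (h5 : l5 ≤ l4) (h6 : l6 ≤ l5) (hlb : -1 ≤ l6)
    (htr : 0 ≤ 1 + l2 + l3 + l4 + l5 + l6)
    (hc1 : 0 ≤ 1 / 6 + l2 / 6 + 2 * l6 / 3)
    (hc2 : 0 ≤ 1 / 6 + l2 / 6 - 2 * l3 / 3 + l4 / 3)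
    (hc3 : 0 ≤ 1 / 6 + l2 / 6 - 2 * l5 / 3 + l6 / 3) :
    ∃ D : Matrix (Fin 6) (Fin 6) ℝ, DoublyStochastic D ∧
      D.charpoly = (X - C 1) * (X - C l2) * (X - C l3) * (X - C l4) * (X - C l5) *
        (X - C l6) :=
  rdiep_six_general l2 l3 l4 l5 l6 h2 h4 h5 h6 hc1 hc2 hc3
end

section
/- Let a, b, c be real numbers with 1 + c + 2a ≥ 0, −1 ≤ c ≤ 1, and a² + b² ≤ 1. If 1 − c − 2b ≥ 0, 1 − c + 2b ≥ 0, and 1 + c − 2a ≥ 0, then there exists a 4×4 doubly stochastic matrix whose eigenvalues, counted with algebraic multiplicity, are 1, c, a + ib, a − ib (where i is the imaginary unit). -/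
/-!
The witness is a circulant matrix with first row `p, q, r, s`. Its eigenvectors are the
characters of `ZMod 4`, so its eigenvalues are `p + q + r + s`, `p - q + r - s` and `(p - r) ± (q - s) i`.
Solving for `1, c, a ± bi` gives `p, r = (1 + c ± 2a) / 4` and `q, s = (1 - c ± 2b) / 4`:
the four hypotheses on `a, b, c` say exactly that these entries are nonnegative, and the row
and column sums of a circulant matrix all equal `p + q + r + s = 1`.
-/

open Matrix Polynomial

theorem doublyStochastic_circulant {n : ℕ} [NeZero n] {v : Fin n → ℝ} (hv : ∀ i, 0 ≤ v i)
    (hsum : ∑ i, v i = 1) : DoublyStochastic (circulant v) :=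
  ⟨fun _ _ => hv _,
    fun i => by simpa [circulant_apply] using (Equiv.subLeft i).sum_comp v ▸ hsum,
    fun j => by simpa [circulant_apply] using (Equiv.subRight j).sum_comp v ▸ hsum⟩

theorem charpoly_circulant_fin_four {R : Type*} [CommRing R] (p q r s : R) :
    (circulant ![p, q, r, s]).charpoly =
      (X - C (p + q + r + s)) * (X - C (p - q + r - s)) *
        (X ^ 2 - C (2 * (p - r)) * X + C ((p - r) ^ 2 + (q - s) ^ 2)) := by
  rw [charpoly, det_succ_row_zero]
  simp only [Fin.sum_univ_four, det_fin_three, submatrix_apply, charmatrix_apply, circulant_apply,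
    Fin.succAbove, diagonal_apply, Fin.isValue, Fin.reduceSucc, Fin.reduceCastSucc, Fin.reduceLT,
    Fin.reduceSub, Fin.reduceEq, Fin.coe_ofNat_eq_mod, ↓reduceIte, cons_val,
    map_add, map_sub, map_mul, map_pow, map_ofNat]
  ring

theorem X_sq_sub_C_mul_X_add_C_eq_mul_X_sub_C (a b : ℂ) :
    X ^ 2 - C (2 * a) * X + C (a ^ 2 + b ^ 2) =
      (X - C (a + b * Complex.I)) * (X - C (a - b * Complex.I)) := by
  have hI : (C Complex.I : ℂ[X]) ^ 2 = -1 := by rw [← C_pow, Complex.I_sq, C_neg, C_1]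
  simp only [C_add, C_sub, C_mul, C_pow, map_ofNat]
  linear_combination C b ^ 2 * hI

theorem charpoly_circulant_fin_four_map_complex (p q r s : ℝ) :
    (circulant ![p, q, r, s]).charpoly.map (algebraMap ℝ ℂ) =
      (X - C ((p + q + r + s : ℝ) : ℂ)) * (X - C ((p - q + r - s : ℝ) : ℂ)) *
        (X - C (((p - r : ℝ) : ℂ) + ((q - s : ℝ) : ℂ) * Complex.I)) *
        (X - C (((p - r : ℝ) : ℂ) - ((q - s : ℝ) : ℂ) * Complex.I)) := by
  rw [charpoly_circulant_fin_four, mul_assoc (_ * _), ← X_sq_sub_C_mul_X_add_C_eq_mul_X_sub_C]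
  simp only [Polynomial.map_mul, Polynomial.map_add, Polynomial.map_sub, Polynomial.map_pow,
    Polynomial.map_X, map_C, Complex.coe_algebraMap]
  push_cast
  rfl

theorem diep_four_complex_general (a b c : ℝ)
    (htr : 0 ≤ 1 + c + 2 * a)
    (h1 : 0 ≤ 1 - c - 2 * b)
    (h2 : 0 ≤ 1 - c + 2 * b)
    (h3 : 0 ≤ 1 + c - 2 * a) :
    ∃ D : Matrix (Fin 4) (Fin 4) ℝ, DoublyStochastic D ∧
      D.charpoly.map (algebraMap ℝ ℂ) =
        (X - C 1) * (X - C (c : ℂ)) *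
          (X - C ((a : ℂ) + (b : ℂ) * Complex.I)) *
          (X - C ((a : ℂ) - (b : ℂ) * Complex.I)) := by
  set p := (1 + c + 2 * a) / 4
  set q := (1 - c + 2 * b) / 4
  set r := (1 + c - 2 * a) / 4
  set s := (1 - c - 2 * b) / 4
  have hsum : p + q + r + s = 1 := by ring
  refine ⟨circulant ![p, q, r, s], doublyStochastic_circulant ?_ ?_, ?_⟩
  · intro i
    fin_cases i <;> simp only [Fin.isValue, Fin.zero_eta, Fin.mk_one, Fin.reduceFinMk, cons_val] <;>
      positivity
  · simpa only [Fin.sum_univ_four, cons_val, Fin.isValue, ← add_assoc] using hsum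
  · rw [charpoly_circulant_fin_four_map_complex, hsum,
      show p - q + r - s = c by ring, show p - r = a by ring, show q - s = b by ring,
      Complex.ofReal_one]

/-- If `a, b, c` are real with `1 + c + 2a ≥ 0`, `-1 ≤ c ≤ 1`, `a² + b² ≤ 1`,
`1 - c - 2b ≥ 0`, `1 - c + 2b ≥ 0` and `1 + c - 2a ≥ 0`, then `1, c, a + ib, a - ib` is
the spectrum of a `4 × 4` doubly stochastic matrix. -/
theorem diep_four_complex (a b c : ℝ)
    (htr : 0 ≤ 1 + c + 2 * a) (hc1 : -1 ≤ c) (hc2 : c ≤ 1)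
    (hab : a ^ 2 + b ^ 2 ≤ 1)
    (h1 : 0 ≤ 1 - c - 2 * b)
    (h2 : 0 ≤ 1 - c + 2 * b)
    (h3 : 0 ≤ 1 + c - 2 * a) :
    ∃ D : Matrix (Fin 4) (Fin 4) ℝ, DoublyStochastic D ∧
      D.charpoly.map (algebraMap ℝ ℂ) =
        (X - C 1) * (X - C (c : ℂ)) *
          (X - C ((a : ℂ) + (b : ℂ) * Complex.I)) *
          (X - C ((a : ℂ) - (b : ℂ) * Complex.I)) :=
  diep_four_complex_general a b c htr h1 h2 h3
end
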